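/- Assume μ > 4, θ ∈ (θ_*(μ), θ^*(μ)) and 0 ≤ p < 4/(4+μ), and let x_d < x_m < x_u be the three fixed points of S. Then (S'(x_d) − 1)·(1 − p − p·S'(x_d)) < 0, (S'(x_m) − 1)·(1 − p − p·S'(x_m)) > 0, and (S'(x_u) − 1)·(1 − p − p·S'(x_u)) < 0; that is, the maximal real part of the linear dispersion relation is negative at the down state x_d and the up state x_u (linear stability) and positive at the middle state x_m (linear instability). -/

import Mathlib

/-- The sigmoid nonlinearity `S(x) = 1/(1 + exp(-μ(x - θ)))`. -/
noncomputable def sigmoid (μ θ x : ℝ) : ℝ := 1 / (1 + Real.exp (-μ * (x - θ)))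

/-- The function `f(x) = x + (1/μ)·ln((1−x)/x)`. -/
noncomputable def fmu (μ x : ℝ) : ℝ := x + (1 / μ) * Real.log ((1 - x) / x)

/-- `θ_*(μ) = f(x_*(μ))` with `x_*(μ) = 1/2 − √(1/4 − 1/μ)`. -/
noncomputable def thetalow (μ : ℝ) : ℝ := fmu μ (1 / 2 - Real.sqrt (1 / 4 - 1 / μ))

/-- `θ^*(μ) = f(x^*(μ))` with `x^*(μ) = 1/2 + √(1/4 − 1/μ)`. -/
noncomputable def thetahigh (μ : ℝ) : ℝ := fmu μ (1 / 2 + Real.sqrt (1 / 4 - 1 / μ))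

/-! At a fixed point of `S` one has `S'(x) = μ x (1 - x)`, and
`μ x (1 - x) - 1 = -μ (x - x_*) (x - x^*)`, so `S'(x) - 1` is negative outside `[x_*, x^*]` and
positive inside. The second factor is always positive because `S' ≤ μ / 4` and
`p (1 + μ / 4) < 1`. The fixed points of `S` in `(0, 1)` are the solutions of `f(x) = θ`; as
`f → +∞` at `0`, `f → -∞` at `1` and `f(x_*) < θ < f(x^*)`, the intermediate value theorem gives a
fixed point in each of `(0, x_*)`, `(x_*, x^*)`, `(x^*, 1)`, and these must be `x_d < x_m < x_u`. -/

open Set Filter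

lemma eq_and_eq_and_eq_of_lt_of_lt {α : Type*} [LinearOrder α] {a b c x y z : α}
    (hab : a < b) (hbc : b < c) (hxy : x < y) (hyz : y < z)
    (hx : x = a ∨ x = b ∨ x = c) (hy : y = a ∨ y = b ∨ y = c) (hz : z = a ∨ z = b ∨ z = c) :
    x = a ∧ y = b ∧ z = c := by
  rcases hx with rfl | rfl | rfl <;> rcases hy with rfl | rfl | rfl <;>
    rcases hz with rfl | rfl | rfl <;> first | exact ⟨rfl, rfl, rfl⟩ | order

section Sigmoid

variable {μ θ : ℝ}

lemma sigmoid_eq_real_sigmoid (μ θ x : ℝ) : sigmoid μ θ x = Real.sigmoid (μ * (x - θ)) := by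
  rw [sigmoid, Real.sigmoid_def, one_div, neg_mul]

lemma hasDerivAt_sigmoid (μ θ x : ℝ) :
    HasDerivAt (sigmoid μ θ) (μ * sigmoid μ θ x * (1 - sigmoid μ θ x)) x := by
  have hlin : HasDerivAt (fun x => μ * (x - θ)) μ x := by
    simpa using ((hasDerivAt_id x).sub_const θ).const_mul μ
  rw [funext (sigmoid_eq_real_sigmoid μ θ)]
  exact ((Real.hasDerivAt_sigmoid _).comp x hlin).congr_deriv (by ring)

lemma deriv_sigmoid_of_sigmoid_eq_self {x : ℝ} (hx : sigmoid μ θ x = x) :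
    deriv (sigmoid μ θ) x = μ * x * (1 - x) := by
  rw [(hasDerivAt_sigmoid μ θ x).deriv, hx]

lemma fmu_real_sigmoid (μ y : ℝ) : fmu μ (Real.sigmoid y) = Real.sigmoid y - y / μ := by
  have hratio : (1 - Real.sigmoid y) / Real.sigmoid y = Real.exp (-y) := by
    rw [← Real.sigmoid_neg, ← Real.sigmoid_mul_rexp_neg, mul_div_cancel_left₀ _
      (Real.sigmoid_pos y).ne']
  rw [fmu, hratio, Real.log_exp]
  ring

lemma tendsto_fmu_real_sigmoid_atBot (hμ : 0 < μ) :
    Tendsto (fun y => fmu μ (Real.sigmoid y)) atBot atTop := by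
  simp only [fmu_real_sigmoid]
  refine tendsto_atTop_mono (fun y => ?_) (tendsto_neg_atBot_atTop.atTop_div_const hμ)
  linarith [Real.sigmoid_pos y, neg_div μ y]

lemma tendsto_fmu_real_sigmoid_atTop (hμ : 0 < μ) :
    Tendsto (fun y => fmu μ (Real.sigmoid y)) atTop atBot := by
  simp only [fmu_real_sigmoid]
  refine tendsto_atBot_mono (fun y => ?_)
    (tendsto_atBot_add_const_left _ 1 (tendsto_neg_atTop_atBot.atBot_div_const hμ))
  linarith [Real.sigmoid_lt_one y, neg_div μ y]

lemma fmu_continuousOn : ContinuousOn (fmu μ) (Ioo 0 1) := by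
  refine continuousOn_id.add (continuousOn_const.mul (ContinuousOn.log ?_ fun x hx => ?_))
  · exact (continuousOn_const.sub continuousOn_id).div continuousOn_id fun x hx => hx.1.ne'
  · exact (div_pos (sub_pos.2 hx.2) hx.1).ne'

lemma sigmoid_eq_self_of_fmu_eq (hμ : μ ≠ 0) {x : ℝ} (hx : x ∈ Ioo 0 1) (hf : fmu μ x = θ) :
    sigmoid μ θ x = x := by
  have hq : 0 < (1 - x) / x := div_pos (sub_pos.2 hx.2) hx.1
  have harg : μ * (x - θ) = -Real.log ((1 - x) / x) := by
    rw [← hf, fmu]; field_simp; ring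
  rw [sigmoid_eq_real_sigmoid, harg, Real.sigmoid_def, neg_neg, Real.exp_log hq]
  field_simp [hx.1.ne']
  ring

lemma exists_sigmoid_eq_self_of_mem_image (hμ : μ ≠ 0) {a b : ℝ} (ha : 0 < a) (hb : b < 1)
    (hθ : θ ∈ fmu μ '' Ioo a b) : ∃ x ∈ Ioo a b, sigmoid μ θ x = x := by
  obtain ⟨x, hx, hfx⟩ := hθ
  exact ⟨x, hx, sigmoid_eq_self_of_fmu_eq hμ ⟨ha.trans hx.1, hx.2.trans hb⟩ hfx⟩

end Sigmoid

section Critical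

variable {μ : ℝ}

noncomputable def xlow (μ : ℝ) : ℝ := 1 / 2 - Real.sqrt (1 / 4 - 1 / μ)

noncomputable def xhigh (μ : ℝ) : ℝ := 1 / 2 + Real.sqrt (1 / 4 - 1 / μ)

lemma xlow_le_xhigh (μ : ℝ) : xlow μ ≤ xhigh μ := by
  have := Real.sqrt_nonneg (1 / 4 - 1 / μ)
  rw [xlow, xhigh]; linarith

lemma xlow_pos (hμ : 0 < μ) : 0 < xlow μ := by
  have hsqrt : Real.sqrt (1 / 4 - 1 / μ) < 1 / 2 :=
    (Real.sqrt_lt' (by norm_num)).2 (by linarith [one_div_pos.2 hμ])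
  rw [xlow]; linarith

lemma xhigh_lt_one (hμ : 0 < μ) : xhigh μ < 1 := by
  have := xlow_pos hμ
  rw [xlow] at this; rw [xhigh]; linarith

lemma mul_mul_one_sub_sub_one (hμ : 4 ≤ μ) (x : ℝ) :
    μ * x * (1 - x) - 1 = -μ * (x - xlow μ) * (x - xhigh μ) := by
  have hμ0 : μ ≠ 0 := by positivity
  have hsq : Real.sqrt (1 / 4 - 1 / μ) ^ 2 = 1 / 4 - 1 / μ := by
    refine Real.sq_sqrt (sub_nonneg.2 ?_)
    rw [div_le_div_iff₀ (by positivity) (by positivity)]; linarith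
  have hinv : μ * (1 / μ) = 1 := by field_simp
  rw [xlow, xhigh]
  linear_combination (-μ) * hsq + hinv

lemma mul_mul_one_sub_lt_one_of_lt_xlow (hμ : 4 ≤ μ) {x : ℝ} (hx : x < xlow μ) :
    μ * x * (1 - x) < 1 := by
  have hprod : 0 < μ * (xlow μ - x) * (xhigh μ - x) :=
    mul_pos (mul_pos (by linarith) (sub_pos.2 hx)) (sub_pos.2 (hx.trans_le (xlow_le_xhigh μ)))
  linarith [mul_mul_one_sub_sub_one hμ x]

lemma mul_mul_one_sub_lt_one_of_xhigh_lt (hμ : 4 ≤ μ) {x : ℝ} (hx : xhigh μ < x) :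
    μ * x * (1 - x) < 1 := by
  have hprod : 0 < μ * (x - xlow μ) * (x - xhigh μ) :=
    mul_pos (mul_pos (by linarith) (sub_pos.2 ((xlow_le_xhigh μ).trans_lt hx))) (sub_pos.2 hx)
  linarith [mul_mul_one_sub_sub_one hμ x]

lemma one_lt_mul_mul_one_sub (hμ : 4 ≤ μ) {x : ℝ} (hlow : xlow μ < x) (hhigh : x < xhigh μ) :
    1 < μ * x * (1 - x) := by
  have hprod : 0 < μ * (x - xlow μ) * (xhigh μ - x) :=
    mul_pos (mul_pos (by linarith) (sub_pos.2 hlow)) (sub_pos.2 hhigh)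
  linarith [mul_mul_one_sub_sub_one hμ x]

lemma one_sub_sub_mul_mul_one_sub_pos {p : ℝ} (hμ : 0 ≤ μ) (hp0 : 0 ≤ p) (hp : p < 4 / (4 + μ))
    (x : ℝ) : 0 < 1 - p - p * (μ * x * (1 - x)) := by
  have hmax : μ * x * (1 - x) ≤ μ / 4 := by nlinarith [sq_nonneg (2 * x - 1)]
  have hp' : p * (4 + μ) < 4 := (lt_div_iff₀ (by linarith)).1 hp
  nlinarith [mul_le_mul_of_nonneg_left hmax hp0]

end Critical

lemma exists_three_sigmoid_eq_self {μ θ : ℝ} (hμ : 4 < μ)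
    (hθ : θ ∈ Ioo (thetalow μ) (thetahigh μ)) :
    ∃ y₁ y₂ y₃, y₁ < xlow μ ∧ xlow μ < y₂ ∧ y₂ < xhigh μ ∧ xhigh μ < y₃ ∧
      sigmoid μ θ y₁ = y₁ ∧ sigmoid μ θ y₂ = y₂ ∧ sigmoid μ θ y₃ = y₃ := by
  have hμ0 : 0 < μ := by linarith
  have hlow := xlow_pos hμ0
  have hhigh := xhigh_lt_one hμ0
  have hle := xlow_le_xhigh μ
  have hcont {c d : ℝ} (hc : 0 < c) (hd : d < 1) : ContinuousOn (fmu μ) (Icc c d) :=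
    fmu_continuousOn.mono (Icc_subset_Ioo hc hd)
  obtain ⟨u, hfu, hu⟩ := (((tendsto_fmu_real_sigmoid_atBot hμ0).eventually_gt_atTop θ).and
    (Real.tendsto_sigmoid_atBot.eventually (gt_mem_nhds hlow))).exists
  obtain ⟨v, hfv, hv⟩ := (((tendsto_fmu_real_sigmoid_atTop hμ0).eventually_lt_atBot θ).and
    (Real.tendsto_sigmoid_atTop.eventually (lt_mem_nhds hhigh))).exists
  obtain ⟨y₁, hy₁, h₁⟩ := exists_sigmoid_eq_self_of_mem_image hμ0.ne' (Real.sigmoid_pos u)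
    (hle.trans_lt hhigh) (intermediate_value_Ioo' hu.le
      (hcont (Real.sigmoid_pos u) (hle.trans_lt hhigh)) ⟨hθ.1, hfu⟩)
  obtain ⟨y₂, hy₂, h₂⟩ := exists_sigmoid_eq_self_of_mem_image hμ0.ne' hlow hhigh
    (intermediate_value_Ioo hle (hcont hlow hhigh) hθ)
  obtain ⟨y₃, hy₃, h₃⟩ := exists_sigmoid_eq_self_of_mem_image hμ0.ne' (hlow.trans_le hle)
    (Real.sigmoid_lt_one v) (intermediate_value_Ioo' hv.le
      (hcont (hlow.trans_le hle) (Real.sigmoid_lt_one v)) ⟨hfv, hθ.2⟩)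
  exact ⟨y₁, y₂, y₃, hy₁.2, hy₂.1, hy₂.2, hy₃.1, h₁, h₂, h₃⟩

theorem stmt_15_general (μ θ p : ℝ) (hμ : 4 < μ)
    (hθ : θ ∈ Set.Ioo (thetalow μ) (thetahigh μ))
    (hp0 : 0 ≤ p) (hp : p < 4 / (4 + μ))
    (xd xm xu : ℝ) (hdm : xd < xm) (hmu : xm < xu)
    (hall : ∀ x : ℝ, sigmoid μ θ x = x → x = xd ∨ x = xm ∨ x = xu) :
    (deriv (sigmoid μ θ) xd - 1) * (1 - p - p * deriv (sigmoid μ θ) xd) < 0 ∧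
    0 < (deriv (sigmoid μ θ) xm - 1) * (1 - p - p * deriv (sigmoid μ θ) xm) ∧
    (deriv (sigmoid μ θ) xu - 1) * (1 - p - p * deriv (sigmoid μ θ) xu) < 0 := by
  obtain ⟨y₁, y₂, y₃, hy₁, hy₂l, hy₂h, hy₃, h₁, h₂, h₃⟩ := exists_three_sigmoid_eq_self hμ hθ
  obtain ⟨rfl, rfl, rfl⟩ := eq_and_eq_and_eq_of_lt_of_lt hdm hmu (hy₁.trans hy₂l)
    (hy₂h.trans hy₃) (hall _ h₁) (hall _ h₂) (hall _ h₃)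
  have hpos := one_sub_sub_mul_mul_one_sub_pos (by linarith) hp0 hp
  rw [deriv_sigmoid_of_sigmoid_eq_self h₁, deriv_sigmoid_of_sigmoid_eq_self h₂,
    deriv_sigmoid_of_sigmoid_eq_self h₃]
  exact ⟨mul_neg_of_neg_of_pos (sub_neg.2 (mul_mul_one_sub_lt_one_of_lt_xlow hμ.le hy₁)) (hpos _),
    mul_pos (sub_pos.2 (one_lt_mul_mul_one_sub hμ.le hy₂l hy₂h)) (hpos _),
    mul_neg_of_neg_of_pos (sub_neg.2 (mul_mul_one_sub_lt_one_of_xhigh_lt hμ.le hy₃)) (hpos _)⟩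

/-- Assume `μ > 4`, `θ ∈ (θ_*(μ), θ^*(μ))`, `0 ≤ p < 4/(4+μ)`, and let
`x_d < x_m < x_u` be the three fixed points of `S`. Then
`(S'(x_d) − 1)·(1 − p − p·S'(x_d)) < 0`, `(S'(x_m) − 1)·(1 − p − p·S'(x_m)) > 0` and
`(S'(x_u) − 1)·(1 − p − p·S'(x_u)) < 0`: the down and up states are linearly stable
while the middle state is linearly unstable. -/
theorem stmt_15 (μ θ p : ℝ) (hμ : 4 < μ)
    (hθ : θ ∈ Set.Ioo (thetalow μ) (thetahigh μ))
    (hp0 : 0 ≤ p) (hp : p < 4 / (4 + μ))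
    (xd xm xu : ℝ) (hdm : xd < xm) (hmu : xm < xu)
    (hxd : sigmoid μ θ xd = xd) (hxm : sigmoid μ θ xm = xm) (hxu : sigmoid μ θ xu = xu)
    (hall : ∀ x : ℝ, sigmoid μ θ x = x → x = xd ∨ x = xm ∨ x = xu) :
    (deriv (sigmoid μ θ) xd - 1) * (1 - p - p * deriv (sigmoid μ θ) xd) < 0 ∧
    0 < (deriv (sigmoid μ θ) xm - 1) * (1 - p - p * deriv (sigmoid μ θ) xm) ∧
    (deriv (sigmoid μ θ) xu - 1) * (1 - p - p * deriv (sigmoid μ θ) xu) < 0 :=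
  stmt_15_general μ θ p hμ hθ hp0 hp xd xm xu hdm hmu hall
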